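/- arXiv:1710.10344 — 2 statements merged into one kernel-verified Lean document; each statement's English description precedes it below -/
import Mathlib

section
/- Define F(a_1,a_2,a_3) as the sum over all words w in {1,2,3} with a_i occurrences of letter i of the monomial q_1^{s_1(w)} q_2^{s_2(w)} q_3^{s_3(w)} (a Laurent polynomial in q_1,q_2,q_3). Then for a_1,a_2,a_3 ≥ 0 not all zero, F(a_1,a_2,a_3) = q_1^{a_2} q_3^{−a_3} F(a_1−1,a_2,a_3) + q_1^{−a_1} q_2^{a_3} F(a_1,a_2−1,a_3) + q_2^{−a_2} q_3^{a_1} F(a_1,a_2,a_3−1), with F(0,0,0)=1 and F interpreted as 0 when any argument is negative. -/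
/-- Number of pairs of positions i < j with `w i = a` and `w j = b`. -/
def cnt (a b : ℕ) (w : List ℕ) : ℕ :=
  ((Finset.univ : Finset (Fin w.length × Fin w.length)).filter
    (fun p => p.1 < p.2 ∧ w.get p.1 = a ∧ w.get p.2 = b)).card

def s1 (w : List ℕ) : ℤ := (cnt 2 1 w : ℤ) - (cnt 1 2 w : ℤ)
def s2 (w : List ℕ) : ℤ := (cnt 3 2 w : ℤ) - (cnt 2 3 w : ℤ)
def s3 (w : List ℕ) : ℤ := (cnt 1 3 w : ℤ) - (cnt 3 1 w : ℤ)

/-- The (finite) set of words in {1,2,3} with `a1` ones, `a2` twos and `a3` threes. -/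
def W (a1 a2 a3 : ℕ) : Finset (List ℕ) :=
  (List.replicate a1 1 ++ List.replicate a2 2 ++ List.replicate a3 3).permutations.toFinset

/-- The Laurent polynomial ring ℤ[q₁^{±1}, q₂^{±1}, q₃^{±1}]. -/
abbrev R := AddMonoidAlgebra ℤ (Fin 3 →₀ ℤ)

/-- The monomial `qᵢ^k`. -/
noncomputable def q (i : Fin 3) (k : ℤ) : R := AddMonoidAlgebra.single (Finsupp.single i k) 1

/-- The weight `q₁^{s₁(w)} q₂^{s₂(w)} q₃^{s₃(w)}` of a word. -/
noncomputable def weight (w : List ℕ) : R := q 0 (s1 w) * q 1 (s2 w) * q 2 (s3 w)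

/-- The weight enumerator, extended by 0 to negative arguments. -/
noncomputable def F (a1 a2 a3 : ℤ) : R :=
  if 0 ≤ a1 ∧ 0 ≤ a2 ∧ 0 ≤ a3 then ∑ w ∈ W a1.toNat a2.toNat a3.toNat, weight w else 0

/-!
Sort the words by their last letter. Deleting a final letter `c` from a word with letter
counts `(a₁, a₂, a₃)` leaves an arbitrary word with one `c` fewer, and changes each `sᵢ` only by
the pairs ending at the last position, whose number is fixed by the counts: a final `1`, say,
adds `a₂` to `s₁` and `-a₃` to `s₃`.
-/

theorem List.card_filter_getElem_eq_count {α : Type*} [DecidableEq α] (w : List α) (b : α) :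
    (Finset.univ.filter fun i : Fin w.length => w[(i : ℕ)] = b).card = w.count b :=
  Fin.card_filter_univ_eq_vector_get_eq_count b ⟨w, rfl⟩

lemma cnt_cons (a b x : ℕ) (w : List ℕ) :
    cnt a b (x :: w) = (if x = a then w.count b else 0) + cnt a b w := by
  simp only [cnt, Finset.card_filter, Fintype.sum_prod_type, List.length_cons, Fin.sum_univ_succ]
  by_cases hx : x = a <;> simp [hx, List.card_filter_getElem_eq_count]

lemma cnt_append_singleton (a b c : ℕ) (w : List ℕ) :
    cnt a b (w ++ [c]) = cnt a b w + if c = b then w.count a else 0 := by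
  induction w with
  | nil => simp [cnt]
  | cons x w ih =>
    rw [List.cons_append, cnt_cons, ih, cnt_cons, List.count_append, List.count_singleton]
    split_ifs <;> simp_all
    omega

lemma q_add (i : Fin 3) (k l : ℤ) : q i (k + l) = q i k * q i l := by
  simp [q, AddMonoidAlgebra.single_mul_single, Finsupp.single_add]

lemma q_zero (i : Fin 3) : q i 0 = 1 := by
  simp [q, AddMonoidAlgebra.one_def]

lemma weight_append_one (w : List ℕ) :
    weight (w ++ [1]) = q 0 (w.count 2) * q 2 (-(w.count 3 : ℤ)) * weight w := by
  simp only [weight, s1, s2, s3, cnt_append_singleton]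
  norm_num [sub_eq_add_neg, q_add]
  ring

lemma weight_append_two (w : List ℕ) :
    weight (w ++ [2]) = q 0 (-(w.count 1 : ℤ)) * q 1 (w.count 3) * weight w := by
  simp only [weight, s1, s2, s3, cnt_append_singleton]
  norm_num [sub_eq_add_neg, q_add]
  ring

lemma weight_append_three (w : List ℕ) :
    weight (w ++ [3]) = q 1 (-(w.count 2 : ℤ)) * q 2 (w.count 1) * weight w := by
  simp only [weight, s1, s2, s3, cnt_append_singleton]
  norm_num [sub_eq_add_neg, q_add]
  ring

section Permutations

variable {α : Type*} [DecidableEq α]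

theorem List.filter_getLast?_permutations_toFinset {l l' : List α} {c : α}
    (h : l.Perm (l' ++ [c])) :
    l.permutations.toFinset.filter (·.getLast? = some c) =
      l'.permutations.toFinset.image (· ++ [c]) := by
  ext w
  simp only [Finset.mem_filter, Finset.mem_image, List.mem_toFinset, List.mem_permutations,
    List.getLast?_eq_some_iff]
  constructor
  · rintro ⟨hw, v, rfl⟩
    exact ⟨v, (List.perm_append_right_iff _).1 (hw.trans h), rfl⟩
  · rintro ⟨v, hv, rfl⟩
    exact ⟨((List.perm_append_right_iff _).2 hv).trans h.symm, v, rfl⟩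

theorem List.filter_getLast?_permutations_toFinset_eq_empty {l : List α} {c : α} (h : c ∉ l) :
    l.permutations.toFinset.filter (·.getLast? = some c) = ∅ :=
  Finset.filter_eq_empty_iff.2 fun _ hw hc =>
    h ((List.mem_permutations.1 (List.mem_toFinset.1 hw)).mem_iff.1 (List.mem_of_getLast? hc))

end Permutations

lemma count_of_mem_W {a1 a2 a3 : ℕ} {w : List ℕ} (hw : w ∈ W a1 a2 a3) :
    w.count 1 = a1 ∧ w.count 2 = a2 ∧ w.count 3 = a3 := by
  have hperm := List.mem_permutations.1 (List.mem_toFinset.1 hw)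
  simp [hperm.count_eq, List.count_replicate]

lemma getLast?_mem_of_mem_W {a1 a2 a3 : ℕ} (hne : ¬(a1 = 0 ∧ a2 = 0 ∧ a3 = 0)) {w : List ℕ}
    (hw : w ∈ W a1 a2 a3) : w.getLast? ∈ ({some 1, some 2, some 3} : Finset (Option ℕ)) := by
  have hperm := List.mem_permutations.1 (List.mem_toFinset.1 hw)
  have hw0 : w ≠ [] := by
    rintro rfl
    exact hne (by simpa using hperm)
  have hlast := hperm.mem_iff.1 (List.getLast_mem hw0)
  simp only [List.mem_append, List.mem_replicate, or_assoc] at hlast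
  simp only [List.getLast?_eq_some_getLast hw0, Finset.mem_insert, Finset.mem_singleton,
    Option.some.injEq]
  exact hlast.imp And.right (Or.imp And.right And.right)

lemma sum_weight_image_append_singleton {S : Finset (List ℕ)} {c : ℕ} {m : R}
    (h : ∀ w ∈ S, weight (w ++ [c]) = m * weight w) :
    ∑ w ∈ S.image (· ++ [c]), weight w = m * ∑ w ∈ S, weight w := by
  rw [Finset.sum_image fun _ _ _ _ => List.append_cancel_right, Finset.mul_sum]
  exact Finset.sum_congr rfl h

lemma F_natCast (a1 a2 a3 : ℕ) : F a1 a2 a3 = ∑ w ∈ W a1 a2 a3, weight w := by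
  simp [F]

lemma sum_weight_getLast?_one (a1 a2 a3 : ℕ) :
    ∑ w ∈ (W a1 a2 a3).filter (·.getLast? = some 1), weight w =
      q 0 a2 * q 2 (-a3) * F (a1 - 1) a2 a3 := by
  cases a1 with
  | zero =>
    rw [W, List.filter_getLast?_permutations_toFinset_eq_empty (by simp [List.mem_replicate])]
    simp [F]
  | succ a1 =>
    rw [W, List.filter_getLast?_permutations_toFinset
      (l' := List.replicate a1 1 ++ List.replicate a2 2 ++ List.replicate a3 3)
      (List.perm_iff_count.2 fun x => by
        simp [List.count_replicate, List.count_singleton]; split_ifs <;> omega),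
      show ((a1 + 1 : ℕ) : ℤ) - 1 = a1 by push_cast; ring, F_natCast]
    exact sum_weight_image_append_singleton fun w hw => by
      obtain ⟨-, h2, h3⟩ := count_of_mem_W hw
      rw [weight_append_one, h2, h3]

lemma sum_weight_getLast?_two (a1 a2 a3 : ℕ) :
    ∑ w ∈ (W a1 a2 a3).filter (·.getLast? = some 2), weight w =
      q 0 (-a1) * q 1 a3 * F a1 (a2 - 1) a3 := by
  cases a2 with
  | zero =>
    rw [W, List.filter_getLast?_permutations_toFinset_eq_empty (by simp [List.mem_replicate])]
    simp [F]
  | succ a2 =>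
    rw [W, List.filter_getLast?_permutations_toFinset
      (l' := List.replicate a1 1 ++ List.replicate a2 2 ++ List.replicate a3 3)
      (List.perm_iff_count.2 fun x => by
        simp [List.count_replicate, List.count_singleton]; split_ifs <;> omega),
      show ((a2 + 1 : ℕ) : ℤ) - 1 = a2 by push_cast; ring, F_natCast]
    exact sum_weight_image_append_singleton fun w hw => by
      obtain ⟨h1, -, h3⟩ := count_of_mem_W hw
      rw [weight_append_two, h1, h3]

lemma sum_weight_getLast?_three (a1 a2 a3 : ℕ) :
    ∑ w ∈ (W a1 a2 a3).filter (·.getLast? = some 3), weight w =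
      q 1 (-a2) * q 2 a1 * F a1 a2 (a3 - 1) := by
  cases a3 with
  | zero =>
    rw [W, List.filter_getLast?_permutations_toFinset_eq_empty (by simp [List.mem_replicate])]
    simp [F]
  | succ a3 =>
    rw [W, List.filter_getLast?_permutations_toFinset
      (l' := List.replicate a1 1 ++ List.replicate a2 2 ++ List.replicate a3 3)
      (List.perm_iff_count.2 fun x => by
        simp [List.count_replicate, List.count_singleton]; split_ifs <;> omega),
      show ((a3 + 1 : ℕ) : ℤ) - 1 = a3 by push_cast; ring, F_natCast]
    exact sum_weight_image_append_singleton fun w hw => by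
      obtain ⟨h1, h2, -⟩ := count_of_mem_W hw
      rw [weight_append_three, h1, h2]

theorem weight_enumerator_recurrence :
    F 0 0 0 = 1 ∧
    ∀ a1 a2 a3 : ℤ, 0 ≤ a1 → 0 ≤ a2 → 0 ≤ a3 → ¬(a1 = 0 ∧ a2 = 0 ∧ a3 = 0) →
      F a1 a2 a3 =
        q 0 a2 * q 2 (-a3) * F (a1 - 1) a2 a3 +
        q 0 (-a1) * q 1 a3 * F a1 (a2 - 1) a3 +
        q 1 (-a2) * q 2 a1 * F a1 a2 (a3 - 1) := by
  refine ⟨by simp [F, W, weight, s1, s2, s3, cnt, q_zero], ?_⟩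
  intro a1 a2 a3 h1 h2 h3 hne
  lift a1 to ℕ using h1
  lift a2 to ℕ using h2
  lift a3 to ℕ using h3
  have hne : ¬(a1 = 0 ∧ a2 = 0 ∧ a3 = 0) := by exact_mod_cast hne
  rw [F_natCast, ← Finset.sum_fiberwise_of_maps_to fun w hw => getLast?_mem_of_mem_W hne hw,
    Finset.sum_insert (by simp), Finset.sum_insert (by simp), Finset.sum_singleton,
    sum_weight_getLast?_one, sum_weight_getLast?_two, sum_weight_getLast?_three, add_assoc]
end

section
/- The number of words in {1,2,3} with n occurrences of each letter satisfying s_1>0, s_2>0, s_3>0 is divisible by 3 for every n ≥ 1. -/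
/-- The sucker's bet condition. -/
def SBC (w : List ℕ) : Prop := 0 < s1 w ∧ 0 < s2 w ∧ 0 < s3 w

instance : DecidablePred SBC := fun w => by unfold SBC; infer_instance

/-- The cyclic relabeling 1 ↦ 2, 2 ↦ 3, 3 ↦ 1. -/
def sig (l : ℕ) : ℕ := if l = 1 then 2 else if l = 2 then 3 else if l = 3 then 1 else l

/-! The relabeling `sig` permutes the multiset of letters of a word in `W n n n` and cyclically
permutes `(s1, s2, s3)`, so `List.map sig` is an order-3 permutation of the words satisfying `SBC`.
It fixes none of them, since such a word contains the letter 1 and `sig 1 ≠ 1`; hence all its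
orbits have size 3. -/

theorem Finset.prime_dvd_card_of_iterate_eq_self {α : Type*} {s : Finset α} {f : α → α}
    {p : ℕ} [Fact p.Prime] (hmaps : Set.MapsTo f s s) (hperiod : ∀ x ∈ s, f^[p] x = x)
    (hfree : ∀ x ∈ s, f x ≠ x) : p ∣ s.card := by
  classical
  let g : Function.End s := hmaps.restrict
  have hg : g ^ p ^ 1 = 1 := by
    funext x
    rw [pow_one]
    exact Subtype.ext ((hmaps.coe_iterate_restrict x p).trans (hperiod x x.2))
  have hfixed : IsEmpty (Function.fixedPoints g) :=
    ⟨fun x => hfree x.1 x.1.2 (congrArg Subtype.val x.2)⟩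
  have := Equiv.Perm.card_fixedPoints_modEq hg
  rw [Fintype.card_eq_zero_iff.mpr hfixed, Fintype.card_coe] at this
  exact Nat.modEq_zero_iff_dvd.mp this

theorem sig_sig_sig (l : ℕ) : sig (sig (sig l)) = l := by
  unfold sig; split_ifs <;> omega

theorem sig_injective : sig.Injective :=
  fun a b h => by rw [← sig_sig_sig a, ← sig_sig_sig b, h]

theorem cnt_map_of_injective {g : ℕ → ℕ} (hg : g.Injective) (a b : ℕ) (w : List ℕ) :
    cnt (g a) (g b) (w.map g) = cnt a b w := by
  have hl : (w.map g).length = w.length := List.length_map _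
  unfold cnt
  refine Finset.card_equiv ((finCongr hl).prodCongr (finCongr hl)) fun p => ?_
  simp [hg.eq_iff]

theorem s1_map_sig (w : List ℕ) : s1 (w.map sig) = s3 w := by
  rw [s1, s3, ← cnt_map_of_injective sig_injective 1 3, ← cnt_map_of_injective sig_injective 3 1]
  rfl

theorem s2_map_sig (w : List ℕ) : s2 (w.map sig) = s1 w := by
  rw [s2, s1, ← cnt_map_of_injective sig_injective 2 1, ← cnt_map_of_injective sig_injective 1 2]
  rfl

theorem s3_map_sig (w : List ℕ) : s3 (w.map sig) = s2 w := by
  rw [s3, s2, ← cnt_map_of_injective sig_injective 3 2, ← cnt_map_of_injective sig_injective 2 3]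
  rfl

theorem SBC.map_sig {w : List ℕ} (h : SBC w) : SBC (w.map sig) := by
  obtain ⟨h1, h2, h3⟩ := h
  exact ⟨s1_map_sig w ▸ h3, s2_map_sig w ▸ h1, s3_map_sig w ▸ h2⟩

theorem mem_of_cnt_pos {a b : ℕ} {w : List ℕ} (h : 0 < cnt a b w) : b ∈ w := by
  obtain ⟨p, hp⟩ := Finset.card_pos.mp h
  rw [Finset.mem_filter] at hp
  exact hp.2.2.2 ▸ List.get_mem w p.2

theorem SBC.map_sig_ne {w : List ℕ} (h : SBC w) : w.map sig ≠ w := by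
  have hcnt : 0 < cnt 2 1 w := by
    have := h.1
    rw [s1] at this
    omega
  intro hfix
  have := List.map_eq_map_iff.mp (hfix.trans (List.map_id w).symm) 1 (mem_of_cnt_pos hcnt)
  exact absurd this (by decide)

theorem mem_W_iff {a1 a2 a3 : ℕ} {w : List ℕ} :
    w ∈ W a1 a2 a3 ↔ w.Perm (List.replicate a1 1 ++ List.replicate a2 2 ++ List.replicate a3 3) := by
  rw [W, List.mem_toFinset, List.mem_permutations]

theorem map_sig_mem_W {a1 a2 a3 : ℕ} {w : List ℕ} (hw : w ∈ W a1 a2 a3) :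
    w.map sig ∈ W a3 a1 a2 := by
  rw [mem_W_iff] at hw ⊢
  refine (hw.map sig).trans ?_
  simp only [List.map_append, List.map_replicate]
  rw [List.append_assoc (List.replicate a3 _)]
  exact List.perm_append_comm

theorem count_div_three_general (n : ℕ) :
    3 ∣ ((W n n n).filter SBC).card := by
  refine Finset.prime_dvd_card_of_iterate_eq_self (f := List.map sig) ?_ ?_ ?_
  · intro w hw
    rw [Finset.mem_coe, Finset.mem_filter] at hw ⊢
    exact ⟨map_sig_mem_W hw.1, hw.2.map_sig⟩
  · intro w _
    simp [List.map_map, Function.comp_def, sig_sig_sig]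
  · intro w hw
    exact (Finset.mem_filter.mp hw).2.map_sig_ne

theorem count_div_three (n : ℕ) (hn : 1 ≤ n) :
    3 ∣ ((W n n n).filter SBC).card :=
  count_div_three_general n
end
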